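/- arXiv:1705.06066 — 8 statements merged into one kernel-verified Lean document; each statement's English description precedes it below -/
import Mathlib

section
/- For every positive integer k, the sum F_1^2 + 2F_2^2 + 3F_3^2 + ... + kF_k^2 equals F_k(k·F_{k+1} - F_k) + τ, where τ = 0 if k is even and τ = 1 if k is odd. -/
/-! Induction on `k`. Using `F_{k+2} = F_{k+1} + F_k`, the right-hand side grows by
`(k + 1) F_{k+1}^2 - (F_{k+1}^2 - F_{k+1} F_k - F_k^2) + (τ_{k+1} - τ_k)`, and both bracketed
terms equal `(-1)^k`, the first by Cassini's identity. -/

lemma Nat.fib_add_one_sq_sub_fib_add_one_mul_fib_sub_fib_sq (n : ℕ) :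
    (fib (n + 1) : ℤ) ^ 2 - fib (n + 1) * fib n - fib n ^ 2 = (-1) ^ n := by
  have cassini := Int.fib_succ_mul_fib_pred_sub_fib_sq (n + 1 : ℕ)
  rw [show ((n + 1 : ℕ) : ℤ) + 1 = (n + 2 : ℕ) by push_cast; ring,
    show ((n + 1 : ℕ) : ℤ) - 1 = n by push_cast; ring, Int.natAbs_natCast,
    Int.fib_natCast, Int.fib_natCast, Int.fib_natCast, fib_add_two, Nat.cast_add] at cassini
  linear_combination -cassini

lemma ite_even_add_one_sub_ite_even (n : ℕ) :
    ((if Even (n + 1) then 0 else 1) : ℤ) - (if Even n then 0 else 1) = (-1) ^ n := by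
  rw [neg_one_pow_eq_ite]
  by_cases hn : Even n <;> simp [hn, Nat.even_add_one]

theorem sum_j_fib_sq_general (k : ℕ) :
    (∑ j ∈ Finset.Icc 1 k, (j : ℤ) * (Nat.fib j : ℤ) ^ 2) =
      (Nat.fib k : ℤ) * ((k : ℤ) * Nat.fib (k + 1) - Nat.fib k) +
        (if Even k then 0 else 1) := by
  induction k with
  | zero => simp
  | succ k ih =>
    rw [Finset.sum_Icc_succ_top (by omega), ih, Nat.fib_add_two]
    push_cast
    linear_combination Nat.fib_add_one_sq_sub_fib_add_one_mul_fib_sub_fib_sq k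
      - ite_even_add_one_sub_ite_even k

theorem sum_j_fib_sq (k : ℕ) (hk : 0 < k) :
    (∑ j ∈ Finset.Icc 1 k, (j : ℤ) * (Nat.fib j : ℤ) ^ 2) =
      (Nat.fib k : ℤ) * ((k : ℤ) * Nat.fib (k + 1) - Nat.fib k) +
        (if Even k then 0 else 1) :=
  sum_j_fib_sq_general k
end

section
/- If j ≥ 4 is an even integer, then 2·F_{j-1}^{φ(F_j)-1} ≡ F_{j-3} (mod F_j), where φ is Euler's totient function. -/
lemma cassini_even (m : ℕ) :
    Nat.fib (2 * m + 1) ^ 2 = Nat.fib (2 * m) * Nat.fib (2 * m + 2) + 1 := by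
  induction m with
  | zero => simp
  | succ n ih =>
    have h1 : Nat.fib (2 * n + 2) = Nat.fib (2 * n) + Nat.fib (2 * n + 1) := Nat.fib_add_two
    have h2 : Nat.fib (2 * n + 3) = Nat.fib (2 * n + 1) + Nat.fib (2 * n + 2) := by
      rw [show 2 * n + 3 = (2 * n + 1) + 2 by ring]; exact Nat.fib_add_two
    have h3 : Nat.fib (2 * n + 4) = Nat.fib (2 * n + 2) + Nat.fib (2 * n + 3) := by
      rw [show 2 * n + 4 = (2 * n + 2) + 2 by ring]; exact Nat.fib_add_two
    rw [show 2 * (n + 1) + 1 = 2 * n + 3 by ring, show 2 * (n + 1) + 2 = 2 * n + 4 by ring,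
      show 2 * (n + 1) = 2 * n + 2 by ring]
    rw [h3, h2, h1]
    rw [h1] at ih
    nlinarith [ih]

theorem two_fib_pow_totient (j : ℕ) (hj : 4 ≤ j) (hje : Even j) :
    2 * Nat.fib (j - 1) ^ (Nat.totient (Nat.fib j) - 1) ≡ Nat.fib (j - 3) [MOD Nat.fib j] := by
  obtain ⟨m, hm⟩ := hje
  have hm2 : 2 ≤ m := by omega
  have hcas : Nat.fib (j - 1) ^ 2 ≡ 1 [MOD Nat.fib j] := by
    have hc := cassini_even (m - 1)
    have e1 : 2 * (m - 1) + 1 = j - 1 := by omega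
    have e2 : 2 * (m - 1) + 2 = j := by omega
    rw [e1, e2] at hc
    rw [hc]
    have hd : Nat.fib j ∣ (Nat.fib (2 * (m - 1)) * Nat.fib j + 1) - 1 := by simp
    exact ((Nat.modEq_iff_dvd' (Nat.le_add_left 1 _)).mpr hd).symm
  have hfib3 : 2 < Nat.fib j := by
    calc 2 < Nat.fib 4 := by norm_num
    _ ≤ Nat.fib j := Nat.fib_mono hj
  obtain ⟨k, hk⟩ := Nat.totient_even hfib3
  have hkpos : 1 ≤ k := by
    have := Nat.totient_pos.mpr (by omega : 0 < Nat.fib j)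
    omega
  have hexp : Nat.totient (Nat.fib j) - 1 = 2 * (k - 1) + 1 := by omega
  have hpow : Nat.fib (j - 1) ^ (Nat.totient (Nat.fib j) - 1) ≡ Nat.fib (j - 1) [MOD Nat.fib j] := by
    rw [hexp, pow_add, pow_mul, pow_one]
    calc (Nat.fib (j - 1) ^ 2) ^ (k - 1) * Nat.fib (j - 1)
        ≡ 1 ^ (k - 1) * Nat.fib (j - 1) [MOD Nat.fib j] := (hcas.pow _).mul_right _
      _ = Nat.fib (j - 1) := by ring
  have h2 : 2 * Nat.fib (j - 1) ≡ Nat.fib (j - 3) [MOD Nat.fib j] := by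
    have key : 2 * Nat.fib (j - 1) = Nat.fib j + Nat.fib (j - 3) := by
      obtain ⟨n, rfl⟩ := Nat.exists_eq_add_of_le hj
      have e1 : 4 + n - 1 = n + 3 := by omega
      have e2 : 4 + n - 3 = n + 1 := by omega
      have e3 : 4 + n = n + 4 := by omega
      rw [e1, e2, e3]
      have a1 : Nat.fib (n + 3) = Nat.fib (n + 1) + Nat.fib (n + 2) := by
        rw [show n + 3 = (n + 1) + 2 from rfl]; exact Nat.fib_add_two
      have a2 : Nat.fib (n + 4) = Nat.fib (n + 2) + Nat.fib (n + 3) := by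
        rw [show n + 4 = (n + 2) + 2 from rfl]; exact Nat.fib_add_two
      omega
    rw [key]
    exact Nat.add_mod_left _ _
  calc 2 * Nat.fib (j - 1) ^ (Nat.totient (Nat.fib j) - 1)
      ≡ 2 * Nat.fib (j - 1) [MOD Nat.fib j] := hpow.mul_left 2
    _ ≡ Nat.fib (j - 3) [MOD Nat.fib j] := h2
end

section
/- If j ≥ 4 is even, then F_{j-1}·F_{j-3} ≡ 2 (mod F_j). -/
lemma cassini (n : ℕ) :
    (Nat.fib (n + 1) : ℤ) ^ 2 - Nat.fib n * Nat.fib (n + 2) = (-1) ^ n := by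
  induction n with
  | zero => simp
  | succ k ih =>
    have h : (Nat.fib (k + 3) : ℤ) = Nat.fib (k + 1) + Nat.fib (k + 2) := by
      rw [show k + 3 = (k + 1) + 2 from rfl, Nat.fib_add_two]; push_cast; ring
    rw [h, pow_succ]
    have h2 : (Nat.fib (k + 2) : ℤ) = Nat.fib k + Nat.fib (k + 1) := by
      rw [Nat.fib_add_two]; push_cast; ring
    rw [h2] at ih ⊢
    ring_nf at ih ⊢
    linarith

theorem fib_mul_fib_mod_even (j : ℕ) (hj : 4 ≤ j) (hje : Even j) :
    Nat.fib (j - 1) * Nat.fib (j - 3) ≡ 2 [MOD Nat.fib j] := by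
  obtain ⟨n, rfl⟩ : ∃ n, j = n + 4 := ⟨j - 4, by omega⟩
  have hn : Even n := by
    rcases hje with ⟨r, hr⟩; exact ⟨r - 2, by omega⟩
  have hneg : ((-1 : ℤ)) ^ n = 1 := Even.neg_one_pow hn
  have h1 := cassini (n + 1)
  have h2 := cassini (n + 2)
  have e1 : ((-1 : ℤ)) ^ (n + 1) = -1 := Odd.neg_one_pow hn.add_one
  have e2 : ((-1 : ℤ)) ^ (n + 2) = 1 := Even.neg_one_pow (hn.add even_two)
  rw [show n + 1 + 1 = n + 2 from rfl, show n + 1 + 2 = n + 3 from rfl, e1] at h1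
  rw [show n + 2 + 1 = n + 3 from rfl, show n + 2 + 2 = n + 4 from rfl, e2] at h2
  have hc : (Nat.fib (n + 3) : ℤ) = Nat.fib (n + 1) + Nat.fib (n + 2) := by
    rw [show n + 3 = (n + 1) + 2 from rfl, Nat.fib_add_two]; push_cast; ring
  have hd : (Nat.fib (n + 4) : ℤ) = Nat.fib (n + 2) + Nat.fib (n + 3) := by
    rw [show n + 4 = (n + 2) + 2 from rfl, Nat.fib_add_two]; push_cast; ring
  have hgoal : Nat.fib (n + 3) * Nat.fib (n + 1) ≡ 2 [MOD Nat.fib (n + 4)] := by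
    rw [Nat.ModEq.comm, Nat.modEq_iff_dvd]
    refine ⟨2 * (Nat.fib (n + 2) : ℤ) - Nat.fib (n + 3), ?_⟩
    push_cast
    simp only [hd, hc] at h1 h2 ⊢
    linear_combination 2 * h1 + 4 * h2
  simpa using hgoal
end

section
/- The only positive integer solutions (k, n) of the equation F_1 + 2F_2 + 3F_3 + ... + kF_k = F_n are (1,1), (1,2), (2,4), and (4,8). -/
/-!
Write `S k = ∑ j ∈ Icc 1 k, j * F j`. Induction gives `S k + F (k + 3) = k * F (k + 2) + 2`, and
for `k ≤ 8` the equation `S k = F n` forces `n ≤ 13` and is settled by computation. For `k ≥ 9`,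
`S k > F (k + 1)` gives `n = t + k + 2`, and the addition formula
`F n = F t * F (k + 1) + F (t + 1) * F (k + 2)` turns the identity into
`x * F (k + 1) ≡ 2 [MOD F (k + 2)]` for `x = F t + 1`, with `x < 2 * k` by size. Cassini's identity
makes `F (k + 1)` invert itself up to the sign `(-1) ^ k` modulo `F (k + 2)`, so `x` is congruent to
`F (k - 1)` or to `2 * F k`; both lie below `F (k + 2)` and are at least `2 * k`.
-/

open Nat Finset

theorem two_mul_add_two_le_fib {m : ℕ} (hm : 8 ≤ m) : 2 * m + 2 ≤ fib m := by
  induction m, hm using Nat.le_induction with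
  | base => decide
  | succ m hm ih =>
    have : 2 ≤ fib (m - 1) := le_trans (by decide) (fib_mono (show 3 ≤ m - 1 by omega))
    rw [fib_add_one (by omega)]
    omega

theorem natCast_fib_add_two_sq {R : Type*} [CommRing R] (m : ℕ) :
    (fib (m + 2) : R) ^ 2 = fib (m + 3) * fib (m + 1) - (-1) ^ m := by
  have h := Int.fib_succ_mul_fib_pred_sub_fib_sq (m + 2 : ℕ)
  rw [show ((m + 2 : ℕ) : ℤ) + 1 = (m + 3 : ℕ) by push_cast; ring,
    show ((m + 2 : ℕ) : ℤ) - 1 = (m + 1 : ℕ) by push_cast; ring] at h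
  simp only [Int.fib_natCast, Int.natAbs_natCast, pow_add] at h
  have := congrArg (Int.cast : ℤ → R) h
  push_cast at this
  linear_combination -this

theorem eq_fib_or_eq_two_mul_fib_of_mul_fib_eq_two {R : Type*} [CommRing R] {m : ℕ} {x : R}
    (hzero : (fib (m + 3) : R) = 0) (h : x * fib (m + 2) = 2) :
    x = fib m ∨ x = 2 * fib (m + 1) := by
  have h32 : (fib (m + 3) : R) = fib (m + 1) + fib (m + 2) := by rw [fib_add_two, Nat.cast_add]
  have h21 : (fib (m + 2) : R) = fib m + fib (m + 1) := by rw [fib_add_two, Nat.cast_add]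
  have hsq := natCast_fib_add_two_sq (R := R) m
  rcases neg_one_pow_eq_or R m with hs | hs <;> rw [hs] at hsq
  · right
    linear_combination x * hsq - fib (m + 2) * h + (x * fib (m + 1) - 2) * hzero + 2 * h32
  · left
    linear_combination (-x) * hsq + fib (m + 2) * h + (1 - x * fib (m + 1)) * hzero - h32 + h21

theorem fib_le_of_mul_fib_modEq_two {m x : ℕ} (hx : x < fib (m + 3))
    (h : x * fib (m + 2) ≡ 2 [MOD fib (m + 3)]) : fib m ≤ x := by
  obtain rfl | hm := m.eq_zero_or_pos
  · simp
  have hZ : (x : ZMod (fib (m + 3))) * fib (m + 2) = 2 := by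
    exact_mod_cast (ZMod.natCast_eq_natCast_iff _ _ _).2 h
  have hlt : fib m ≤ 2 * fib (m + 1) ∧ 2 * fib (m + 1) < fib (m + 3) := by
    have : 0 < fib m := fib_pos.2 hm
    have : fib m ≤ fib (m + 1) := fib_le_fib_succ
    have h3 : fib (m + 3) = fib (m + 1) + fib (m + 2) := fib_add_two
    have h2 : fib (m + 2) = fib m + fib (m + 1) := fib_add_two
    omega
  rcases eq_fib_or_eq_two_mul_fib_of_mul_fib_eq_two (ZMod.natCast_self _) hZ with h' | h'
  · have := (ZMod.natCast_eq_natCast_iff' _ _ _).1 h'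
    rw [Nat.mod_eq_of_lt hx, Nat.mod_eq_of_lt (by omega)] at this
    omega
  · have := (ZMod.natCast_eq_natCast_iff' x (2 * fib (m + 1)) _).1 (by exact_mod_cast h')
    rw [Nat.mod_eq_of_lt hx, Nat.mod_eq_of_lt hlt.2] at this
    omega

theorem sum_Icc_mul_fib_add_fib (k : ℕ) :
    ∑ j ∈ Icc 1 k, j * fib j + fib (k + 3) = k * fib (k + 2) + 2 := by
  induction k with
  | zero => rfl
  | succ k ih =>
    rw [sum_Icc_succ_top (by omega)]
    have h4 : fib (k + 4) = fib (k + 2) + fib (k + 3) := fib_add_two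
    have h3 : fib (k + 3) = fib (k + 1) + fib (k + 2) := fib_add_two
    grind

theorem sum_Icc_mul_fib_ne_fib {k : ℕ} (hk : 9 ≤ k) (n : ℕ) :
    ∑ j ∈ Icc 1 k, j * fib j ≠ fib n := by
  intro h
  have hid := sum_Icc_mul_fib_add_fib k
  rw [h] at hid
  obtain ⟨m, rfl⟩ : ∃ m, k = m + 1 := ⟨k - 1, by omega⟩
  have h4 : fib (m + 4) = fib (m + 2) + fib (m + 3) := fib_add_two
  have h3 : fib (m + 3) = fib (m + 1) + fib (m + 2) := fib_add_two
  have hn : m + 2 < n := by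
    refine (fib_lt_fib (by omega)).1 ?_
    nlinarith
  obtain ⟨t, rfl⟩ : ∃ t, n = t + (m + 2) + 1 := ⟨n - m - 3, by omega⟩
  have key : (fib t + 1) * fib (m + 2) + (fib (t + 1) + 1) * fib (m + 3) =
      (m + 1) * fib (m + 3) + 2 := by
    rw [fib_add] at hid
    linarith
  have hx : fib t + 1 < 2 * (m + 1) := by
    have : fib (m + 1) ≤ fib (m + 2) := fib_le_fib_succ
    have : 2 < fib (m + 3) := le_trans (by decide) (fib_mono (show 4 ≤ m + 3 by omega))
    refine Nat.lt_of_mul_lt_mul_right (a := fib (m + 2)) ?_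
    nlinarith
  have hcong : (fib t + 1) * fib (m + 2) ≡ 2 [MOD fib (m + 3)] := by
    have := congrArg (· % fib (m + 3)) key
    simpa [Nat.ModEq, Nat.add_mul_mod_self_right, add_comm] using this
  have hm : 2 * m + 2 ≤ fib m := two_mul_add_two_le_fib (by omega)
  have := fib_le_of_mul_fib_modEq_two ((fib_mono (m.le_add_right 3)).trans_lt' (by omega)) hcong
  omega

theorem sum_Icc_mul_fib_eq_fib_of_lt {k n : ℕ} (hk : k < 9)
    (h : ∑ j ∈ Icc 1 k, j * fib j = fib n) :
    (k, n) = (0, 0) ∨ (k, n) = (1, 1) ∨ (k, n) = (1, 2) ∨ (k, n) = (2, 4) ∨ (k, n) = (4, 8) := by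
  have hn : n < 14 := fib_mono.reflect_lt <| h ▸ by interval_cases k <;> decide
  have table : ∀ k < 9, ∀ n < 14, (∑ j ∈ Icc 1 k, j * fib j = fib n ↔ (k, n) = (0, 0) ∨
      (k, n) = (1, 1) ∨ (k, n) = (1, 2) ∨ (k, n) = (2, 4) ∨ (k, n) = (4, 8)) := by
    decide +kernel
  exact (table k hk n hn).1 h

theorem sum_j_fib_eq_fib_general (k n : ℕ) (hk : 0 < k) :
    (∑ j ∈ Finset.Icc 1 k, j * Nat.fib j) = Nat.fib n ↔
      (k, n) = (1, 1) ∨ (k, n) = (1, 2) ∨ (k, n) = (2, 4) ∨ (k, n) = (4, 8) := by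
  refine ⟨fun h => ?_, ?_⟩
  · have hk9 : k < 9 := not_le.1 fun hk9 => sum_Icc_mul_fib_ne_fib hk9 n h
    rcases sum_Icc_mul_fib_eq_fib_of_lt hk9 h with h0 | hsol
    · exact absurd (Prod.mk.inj h0).1 hk.ne'
    · exact hsol
  · rintro (h | h | h | h) <;> obtain ⟨rfl, rfl⟩ := Prod.mk.inj h <;> decide

theorem sum_j_fib_eq_fib (k n : ℕ) (hk : 0 < k) (hn : 0 < n) :
    (∑ j ∈ Finset.Icc 1 k, j * Nat.fib j) = Nat.fib n ↔
      (k, n) = (1, 1) ∨ (k, n) = (1, 2) ∨ (k, n) = (2, 4) ∨ (k, n) = (4, 8) :=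
  sum_j_fib_eq_fib_general k n hk
end

section
/- The only positive integer solutions (k, n) of the equation F_1^2 + 2F_2^2 + 3F_3^2 + ... + kF_k^2 = F_n^2 are (1,1) and (1,2). -/
/-!
Write `S k = ∑_{j ≤ k} j F_j²`. By induction, `S (2t) + F_{2t}² = 2t F_{2t} F_{2t+1}` and
`S (2t+1) + F_{2t+2}² = (2t+2) F_{2t+2} F_{2t+1}`, so for `k ≥ 3` and the even `m ∈ {k, k+1}`,
a solution of `S k = F_n²` gives `F_n² + F_m² = m F_m X` with `F_{m-1} ≤ X ≤ F_{m+1}`.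
Size estimates force `m < n < 2m`, while `F_m ∣ F_n²`. With `d = gcd m n`, a proper divisor of
`m`, this gives `F_m ∣ gcd (F_m, F_n)² = F_d²`, which is impossible since `F_d² ≤ F_{2d-1} < F_m`.
-/

open Finset

namespace Nat

theorem fib_sq_lt_fib {d m : ℕ} (hdm : 2 * d ≤ m) (hm : 3 ≤ m) : fib d ^ 2 < fib m := by
  obtain _ | e := d
  · simpa using fib_pos.mpr (by omega : 0 < m)
  obtain ⟨p, rfl⟩ : ∃ p, m = p + 1 := ⟨m - 1, by omega⟩
  calc fib (e + 1) ^ 2 ≤ fib (2 * e + 1) := by rw [fib_two_mul_add_one]; omega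
    _ ≤ fib p := fib_mono (by omega)
    _ < fib (p + 1) := fib_lt_fib_succ (by omega)

theorem fib_dvd_fib_gcd_sq {m n : ℕ} (h : fib m ∣ fib n ^ 2) : fib m ∣ fib (gcd m n) ^ 2 := by
  rw [fib_gcd]
  exact (dvd_gcd dvd_rfl h).trans gcd_pow_right_dvd_pow_gcd

theorem two_mul_gcd_le {m n : ℕ} (hmn : m < n) (hn : n < 2 * m) : 2 * gcd m n ≤ m := by
  by_contra! h
  have hm : m = gcd m n := eq_of_dvd_of_lt_two_mul (by omega) (gcd_dvd_left m n) h
  have hdvd : m ∣ n - m := Nat.dvd_sub (hm ▸ gcd_dvd_right m n) dvd_rfl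
  have := eq_zero_of_dvd_of_lt hdvd (by omega)
  omega

theorem not_fib_dvd_fib_sq {m n : ℕ} (hm : 3 ≤ m) (hmn : m < n) (hn : n < 2 * m) :
    ¬ fib m ∣ fib n ^ 2 := by
  intro h
  have hpos : 0 < fib (gcd m n) ^ 2 :=
    pow_pos (fib_pos.mpr (gcd_pos_of_pos_left n (by omega))) 2
  exact absurd (le_of_dvd hpos (fib_dvd_fib_gcd_sq h))
    (not_le.mpr (fib_sq_lt_fib (two_mul_gcd_le hmn hn) hm))

theorem sum_Icc_mul_fib_sq_add_fib_sq (t : ℕ) :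
    ∑ j ∈ Icc 1 (2 * t), j * fib j ^ 2 + fib (2 * t) ^ 2 = 2 * t * fib (2 * t) * fib (2 * t + 1) ∧
    ∑ j ∈ Icc 1 (2 * t + 1), j * fib j ^ 2 + fib (2 * t + 2) ^ 2 =
      (2 * t + 2) * fib (2 * t + 2) * fib (2 * t + 1) := by
  have odd_of_even {t : ℕ} (h : ∑ j ∈ Icc 1 (2 * t), j * fib j ^ 2 + fib (2 * t) ^ 2 =
      2 * t * fib (2 * t) * fib (2 * t + 1)) :
      ∑ j ∈ Icc 1 (2 * t + 1), j * fib j ^ 2 + fib (2 * t + 2) ^ 2 =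
        (2 * t + 2) * fib (2 * t + 2) * fib (2 * t + 1) := by
    rw [sum_Icc_succ_top (by omega), fib_add_two (n := 2 * t)]
    linear_combination h
  induction t with
  | zero => simp
  | succ t ih =>
    have heven : ∑ j ∈ Icc 1 (2 * (t + 1)), j * fib j ^ 2 + fib (2 * (t + 1)) ^ 2 =
        2 * (t + 1) * fib (2 * (t + 1)) * fib (2 * (t + 1) + 1) := by
      rw [show 2 * (t + 1) = 2 * t + 1 + 1 by ring, sum_Icc_succ_top (by omega),
        fib_add_two (n := 2 * t + 1)]
      linear_combination ih.2
    exact ⟨heven, odd_of_even heven⟩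

theorem fib_mul_fib_succ_le_fib_two_mul (m : ℕ) : fib m * fib (m + 1) ≤ fib (2 * m) := by
  rw [fib_two_mul]
  exact Nat.mul_le_mul_left _ (by have := fib_le_fib_succ (n := m); omega)

theorem fib_lt_two_mul_fib_sub_one {m : ℕ} (hm : 4 ≤ m) : fib m < 2 * fib (m - 1) := by
  obtain ⟨p, rfl⟩ : ∃ p, m = p + 2 := ⟨m - 2, by omega⟩
  have := fib_lt_fib_succ (n := p) (by omega)
  rw [fib_add_two, show p + 2 - 1 = p + 1 by omega]
  omega

theorem fib_sq_add_fib_sq_ne {m n X : ℕ} (hm : 4 ≤ m) (hX : fib (m - 1) ≤ X)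
    (hX' : X ≤ fib (m + 1)) : fib n ^ 2 + fib m ^ 2 ≠ m * fib m * X := by
  intro h
  have hfm : 0 < fib m := fib_pos.mpr (by omega)
  have hdvd : fib m ∣ fib n ^ 2 :=
    (Nat.dvd_add_left (dvd_pow_self _ two_ne_zero)).mp (h ▸ ⟨m * X, by ring⟩)
  have hlow : fib m ^ 2 < fib n ^ 2 := by
    have : 2 * fib m < m * X := calc
      2 * fib m < 4 * fib (m - 1) := by have := fib_lt_two_mul_fib_sub_one hm; omega
      _ ≤ m * X := Nat.mul_le_mul hm hX
    nlinarith
  have hup : fib n ^ 2 < fib (2 * m) ^ 2 := calc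
    fib n ^ 2 < m * fib m * X := h ▸ Nat.lt_add_of_pos_right (pow_pos hfm 2)
    _ ≤ fib (2 * m) * (fib m * fib (m + 1)) := by
      rw [mul_assoc]
      exact Nat.mul_le_mul ((le_fib_self (by omega)).trans' (by omega)) (Nat.mul_le_mul_left _ hX')
    _ ≤ fib (2 * m) ^ 2 := by
      rw [sq]
      exact Nat.mul_le_mul_left _ (fib_mul_fib_succ_le_fib_two_mul m)
  refine not_fib_dvd_fib_sq (by omega) ?_ ?_ hdvd <;> refine fib_mono.reflect_lt ?_
  · exact lt_of_pow_lt_pow_left₀ 2 (Nat.zero_le _) hlow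
  · exact lt_of_pow_lt_pow_left₀ 2 (Nat.zero_le _) hup

theorem sum_Icc_mul_fib_sq_ne_fib_sq {k : ℕ} (hk : 3 ≤ k) (n : ℕ) :
    ∑ j ∈ Icc 1 k, j * fib j ^ 2 ≠ fib n ^ 2 := by
  intro h
  obtain ⟨t, rfl | rfl⟩ := even_or_odd' k
  · have key := (sum_Icc_mul_fib_sq_add_fib_sq t).1
    rw [h] at key
    exact fib_sq_add_fib_sq_ne (by omega) (fib_mono (by omega)) le_rfl key
  · have key := (sum_Icc_mul_fib_sq_add_fib_sq t).2
    rw [h] at key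
    exact fib_sq_add_fib_sq_ne (m := 2 * t + 2) (by omega) le_rfl (fib_mono (by omega)) key

end Nat

theorem sum_j_fib_sq_eq_fib_sq_general (k n : ℕ) (hk : 0 < k) :
    (∑ j ∈ Finset.Icc 1 k, j * Nat.fib j ^ 2) = Nat.fib n ^ 2 ↔
      (k, n) = (1, 1) ∨ (k, n) = (1, 2) := by
  refine ⟨fun h => ?_, by rintro (h | h) <;> simp_all⟩
  rcases (show k ≤ 2 ∨ 3 ≤ k by omega) with hk' | hk'
  · have hn : n < 4 := Nat.fib_mono.reflect_lt <| lt_of_pow_lt_pow_left₀ 2 (Nat.zero_le _) <| by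
      interval_cases k <;> rw [← h] <;> decide
    interval_cases k <;> interval_cases n <;> revert h <;> decide
  · exact absurd h (Nat.sum_Icc_mul_fib_sq_ne_fib_sq hk' n)

theorem sum_j_fib_sq_eq_fib_sq (k n : ℕ) (hk : 0 < k) (hn : 0 < n) :
    (∑ j ∈ Finset.Icc 1 k, j * Nat.fib j ^ 2) = Nat.fib n ^ 2 ↔
      (k, n) = (1, 1) ∨ (k, n) = (1, 2) :=
  sum_j_fib_sq_eq_fib_sq_general k n hk
end

section
/- The only positive integer solutions (k, n) of the equation F_1^2 + 2F_2^2 + 3F_3^2 + ... + kF_k^2 = F_n are (1,1), (1,2), and (2,4). -/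
/-!
Write `S k = ∑_{j ≤ k} j F_j²`, `a = F_k`, `b = F_{k+1}`. Telescoping with Cassini's identity
gives `S k + a² = k a b + k % 2`, which for `k ≥ 5` places `S k` strictly between `F_{2k+2}` and
`k F_{2k+1}`. So if `S k = F_n`, then `n = t + 2k + 1` with `t ≥ 2`, and from
`F_n = F_t F_{2k} + F_{t+1} F_{2k+1}` also `F_{t+1} < k < b`. Modulo `b`, Cassini gives
`a² ≡ ±1`, `F_{2k} ≡ -a²` and `F_{2k+1} ≡ a²`, so `S k ≡ F_n` becomes
`F_{t+1} + [k even] ≡ F_t`. Both sides are smaller than `b`, hence equal, contradicting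
`F_t < F_{t+1}`. The cases `k ≤ 4` are a finite check.
-/

open Finset Nat

/-- Cassini's identity `F_{k+1}² - F_k F_{k+1} - F_k² = (-1)^k`, with the sign written as
`k % 2 - (k + 1) % 2` to stay in `ℕ`. -/
theorem Nat.fib_add_one_sq_add_mod_two (k : ℕ) :
    fib (k + 1) ^ 2 + k % 2 = fib k * fib (k + 1) + fib k ^ 2 + (k + 1) % 2 := by
  induction k with
  | zero => rfl
  | succ k ih =>
    have hpar : (k + 1 + 1) % 2 = k % 2 := by omega
    rw [fib_add_two, hpar]
    nlinarith [ih]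

def weightedFibSqSum (k : ℕ) : ℕ := ∑ j ∈ Icc 1 k, j * fib j ^ 2

theorem weightedFibSqSum_add_fib_sq (k : ℕ) :
    weightedFibSqSum k + fib k ^ 2 = k * fib k * fib (k + 1) + k % 2 := by
  induction k with
  | zero => rfl
  | succ k ih =>
    have hcas := fib_add_one_sq_add_mod_two k
    rw [weightedFibSqSum, sum_Icc_succ_top (by omega), ← weightedFibSqSum, fib_add_two]
    nlinarith [ih]

theorem fib_two_mul_add_two_lt_weightedFibSqSum {k : ℕ} (hk : 5 ≤ k) :
    fib (2 * k + 2) < weightedFibSqSum k := by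
  have hS := weightedFibSqSum_add_fib_sq k
  have hab : fib k < fib (k + 1) := fib_lt_fib_succ (by omega)
  have hba : fib (k + 1) < 2 * fib k := by
    have : fib (k - 1) < fib k := fib_lt_fib (by omega) |>.mpr (by omega)
    rw [fib_add_one (by omega)]
    omega
  have h5k : 5 * (fib k * fib (k + 1)) ≤ k * (fib k * fib (k + 1)) := Nat.mul_le_mul_right _ hk
  have hbb : fib (k + 1) * fib (k + 1) < 2 * fib k * fib (k + 1) :=
    Nat.mul_lt_mul_of_pos_right hba (fib_pos.mpr (by omega))
  have haa : fib k * fib k < fib k * fib (k + 1) :=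
    Nat.mul_lt_mul_of_pos_left hab (fib_pos.mpr (by omega))
  rw [fib_two_mul_add_two]
  linarith [Nat.zero_le (k % 2)]

theorem weightedFibSqSum_lt_mul_fib_two_mul_add_one {k : ℕ} (hk : 0 < k) :
    weightedFibSqSum k < k * fib (2 * k + 1) := by
  have hS := weightedFibSqSum_add_fib_sq k
  have ha : 0 < fib k := fib_pos.mpr hk
  have hb : 0 < fib (k + 1) := fib_pos.mpr (by omega)
  have hab : fib k * fib (k + 1) < fib (k + 1) ^ 2 + fib k ^ 2 := by
    nlinarith [fib_le_fib_succ (n := k)]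
  rw [fib_two_mul_add_one]
  nlinarith [Nat.mod_lt k two_pos, Nat.mul_lt_mul_of_pos_left hab hk]

section ModFibSucc

variable (k : ℕ)

theorem fib_sq_cast_zmod_fib_succ :
    ((fib k ^ 2 : ℕ) : ZMod (fib (k + 1))) = (k % 2 : ℕ) - ((k + 1) % 2 : ℕ) := by
  have h := congrArg (Nat.cast : ℕ → ZMod (fib (k + 1))) (fib_add_one_sq_add_mod_two k)
  push_cast [ZMod.natCast_self] at h ⊢
  linear_combination -h

theorem weightedFibSqSum_cast_zmod_fib_succ :
    (weightedFibSqSum k : ZMod (fib (k + 1))) = ((k + 1) % 2 : ℕ) := by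
  have h := congrArg (Nat.cast : ℕ → ZMod (fib (k + 1))) (weightedFibSqSum_add_fib_sq k)
  have ha := fib_sq_cast_zmod_fib_succ k
  push_cast [ZMod.natCast_self] at h ha ⊢
  linear_combination h - ha

theorem fib_add_two_mul_add_one_cast_zmod_fib_succ (t : ℕ) :
    (fib (t + 2 * k + 1) : ZMod (fib (k + 1))) = (fib k ^ 2 : ℕ) * (fib (t + 1) - fib t) := by
  have h2k : fib (2 * k) + fib k ^ 2 = 2 * fib k * fib (k + 1) := by
    rw [fib_two_mul]
    have : fib k ≤ 2 * fib (k + 1) := by linarith [fib_le_fib_succ (n := k)]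
    zify [this]
    ring
  have h := congrArg (Nat.cast : ℕ → ZMod (fib (k + 1))) h2k
  rw [fib_add, fib_two_mul_add_one]
  push_cast [ZMod.natCast_self] at h ⊢
  linear_combination fib t * h

theorem fib_add_one_add_mod_two_modEq_of_weightedFibSqSum_eq {t : ℕ}
    (h : weightedFibSqSum k = fib (t + 2 * k + 1)) :
    fib (t + 1) + (k + 1) % 2 ≡ fib t [MOD fib (k + 1)] := by
  have hcast := congrArg (Nat.cast : ℕ → ZMod (fib (k + 1))) h
  rw [weightedFibSqSum_cast_zmod_fib_succ, fib_add_two_mul_add_one_cast_zmod_fib_succ,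
    fib_sq_cast_zmod_fib_succ] at hcast
  rw [← ZMod.natCast_eq_natCast_iff]
  push_cast
  rcases Nat.mod_two_eq_zero_or_one k with heven | hodd
  · simp only [show (k + 1) % 2 = 1 by omega, heven, Nat.cast_zero, Nat.cast_one] at hcast ⊢
    linear_combination hcast
  · simp only [show (k + 1) % 2 = 0 by omega, hodd, Nat.cast_zero, Nat.cast_one] at hcast ⊢
    linear_combination -hcast

end ModFibSucc

theorem weightedFibSqSum_ne_fib {k : ℕ} (hk : 5 ≤ k) (n : ℕ) :
    weightedFibSqSum k ≠ fib n := by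
  intro h
  have hn : 2 * k + 2 < n := fib_mono.reflect_lt (h ▸ fib_two_mul_add_two_lt_weightedFibSqSum hk)
  obtain ⟨t, rfl⟩ : ∃ t, n = t + 2 * k + 1 := ⟨n - (2 * k + 1), by omega⟩
  have hfib_t : fib t < fib (t + 1) := fib_lt_fib_succ (by omega)
  have hfib_t_succ : fib (t + 1) < k := by
    have hlt := weightedFibSqSum_lt_mul_fib_two_mul_add_one (by omega : 0 < k)
    rw [h, fib_add] at hlt
    exact Nat.lt_of_mul_lt_mul_right (by omega : fib (t + 1) * fib (2 * k + 1) < _)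
  have hk_fib : k < fib (k + 1) := le_fib_self (by omega)
  have heq := (fib_add_one_add_mod_two_modEq_of_weightedFibSqSum_eq k h).eq_of_lt_of_lt
    (by omega) (by omega)
  omega

theorem sum_j_fib_sq_eq_fib_general (k n : ℕ) (hk : 0 < k) :
    (∑ j ∈ Finset.Icc 1 k, j * Nat.fib j ^ 2) = Nat.fib n ↔
      (k, n) = (1, 1) ∨ (k, n) = (1, 2) ∨ (k, n) = (2, 4) := by
  constructor
  · intro h
    rcases lt_or_ge k 5 with hk5 | hk5
    · have hn : n < 12 := fib_mono.reflect_lt <| by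
        rw [← h]; interval_cases k <;> decide
      interval_cases k <;> interval_cases n <;> revert h <;> decide
    · exact absurd h (weightedFibSqSum_ne_fib hk5 n)
  · rintro (h | h | h) <;> cases h <;> decide

theorem sum_j_fib_sq_eq_fib (k n : ℕ) (hk : 0 < k) (hn : 0 < n) :
    (∑ j ∈ Finset.Icc 1 k, j * Nat.fib j ^ 2) = Nat.fib n ↔
      (k, n) = (1, 1) ∨ (k, n) = (1, 2) ∨ (k, n) = (2, 4) :=
  sum_j_fib_sq_eq_fib_general k n hk
end

section
/- For every κ ≥ 1 and 0 ≤ j ≤ κ-1, F_{2κ+j}^2 ≡ F_j^2 (mod F_κ) and F_{2κ-j}^2 ≡ F_j^2 (mod F_κ). -/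
private lemma fib_key (i j : ℕ) :
    (Nat.fib i : ℤ) = (-1)^j * (Nat.fib (i+j) * Nat.fib (j+1) - Nat.fib (i+j+1) * Nat.fib j) := by
  induction j with
  | zero => simp
  | succ j ih =>
    have h1 : (Nat.fib (i + j + 2) : ℤ) = Nat.fib (i+j) + Nat.fib (i+j+1) := by
      rw [Nat.fib_add_two]; push_cast; ring
    have h2 : (Nat.fib (j + 2) : ℤ) = Nat.fib j + Nat.fib (j+1) := by
      rw [Nat.fib_add_two]; push_cast; ring
    show (Nat.fib i : ℤ) = (-1)^(j+1) * (Nat.fib (i+j+1) * Nat.fib (j+2) - Nat.fib (i+j+2) * Nat.fib (j+1))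
    rw [ih, h1, h2]; ring

private lemma fib_add_mod (k m : ℕ) :
    (Nat.fib (k + 1 + m) : ℤ) ≡ (Nat.fib k : ℤ) * Nat.fib m [ZMOD (Nat.fib (k+1) : ℤ)] := by
  symm; rw [Int.modEq_iff_dvd]
  refine ⟨(Nat.fib (m+1) : ℤ), ?_⟩
  rw [show k + 1 + m = m + k + 1 by ring, Nat.fib_add]
  push_cast; ring

private lemma fib_sq_mod (k : ℕ) :
    ((Nat.fib k : ℤ))^2 ≡ (-1)^(k+1) [ZMOD (Nat.fib (k+1) : ℤ)] := by
  symm; rw [Int.modEq_iff_dvd]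
  refine ⟨(Nat.fib (k+1) : ℤ) - Nat.fib k, ?_⟩
  have h := fib_key 1 k
  simp only [Nat.fib_one, Nat.one_add] at h
  have h1 : (Nat.fib (k + 2) : ℤ) = Nat.fib k + Nat.fib (k+1) := by
    rw [Nat.fib_add_two]; push_cast; ring
  have hk : ((-1:ℤ))^k * ((-1:ℤ))^k = 1 := by
    rw [← pow_add]; exact (neg_one_pow_eq_one_iff_even (by norm_num)).mpr ⟨k, rfl⟩
  -- from h : 1 = (-1)^k * (F_{k+1}*F_{k+1} - F_{k+2}*F_k)
  have h' : ((-1:ℤ))^k = (Nat.fib (k+1):ℤ) * Nat.fib (k+1) - Nat.fib (k+2) * Nat.fib k := by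
    have := congrArg (fun x => ((-1:ℤ))^k * x) h
    simpa [← mul_assoc, hk] using this
  rw [show ((-1:ℤ))^(k+1) = -(-1)^k by rw [pow_succ]; ring, h', h1]
  ring

theorem fib_sq_period (κ j : ℕ) (hκ : 1 ≤ κ) (hj : j ≤ κ - 1) :
    (Nat.fib (2 * κ + j) : ℤ) ^ 2 ≡ (Nat.fib j : ℤ) ^ 2 [ZMOD (Nat.fib κ : ℤ)] ∧
    (Nat.fib (2 * κ - j) : ℤ) ^ 2 ≡ (Nat.fib j : ℤ) ^ 2 [ZMOD (Nat.fib κ : ℤ)] := by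
  obtain ⟨k, rfl⟩ : ∃ k, κ = k + 1 := ⟨κ - 1, by omega⟩
  have hjk : j ≤ k := by omega
  set N : ℤ := (Nat.fib (k+1) : ℤ) with hN
  -- F_k^4 ≡ 1
  have h4 : ((Nat.fib k : ℤ))^4 ≡ 1 [ZMOD N] := by
    have := (fib_sq_mod k).pow 2
    have e : (((-1:ℤ))^(k+1))^2 = 1 := by
      rw [← pow_mul]; exact (neg_one_pow_eq_one_iff_even (by norm_num)).mpr ⟨k+1, by ring⟩
    rw [← pow_mul] at this
    rw [e] at this
    exact this
  -- first part
  have hA : (Nat.fib (2*(k+1) + j) : ℤ) ≡ (Nat.fib k : ℤ)^2 * Nat.fib j [ZMOD N] := by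
    have h1 := fib_add_mod k (k + 1 + j)
    have h2 := fib_add_mod k j
    have := h1.trans ((Int.ModEq.refl (Nat.fib k : ℤ)).mul h2)
    calc (Nat.fib (2*(k+1) + j) : ℤ) = (Nat.fib (k+1 + (k+1+j)) : ℤ) := by ring_nf
      _ ≡ (Nat.fib k : ℤ) * ((Nat.fib k : ℤ) * Nat.fib j) [ZMOD N] := this
      _ = (Nat.fib k : ℤ)^2 * Nat.fib j := by ring
  constructor
  · calc (Nat.fib (2*(k+1) + j) : ℤ)^2
        ≡ ((Nat.fib k : ℤ)^2 * Nat.fib j)^2 [ZMOD N] := hA.pow 2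
      _ = (Nat.fib k : ℤ)^4 * (Nat.fib j : ℤ)^2 := by ring
      _ ≡ 1 * (Nat.fib j : ℤ)^2 [ZMOD N] := h4.mul_right _
      _ = (Nat.fib j : ℤ)^2 := by ring
  · -- 2κ - j = (k+1) + i where i = k+1-j
    set i : ℕ := k + 1 - j with hi
    have hij : i + j = k + 1 := by omega
    have hB : (Nat.fib (2*(k+1) - j) : ℤ) ≡ (Nat.fib k : ℤ) * Nat.fib i [ZMOD N] := by
      have := fib_add_mod k i
      rwa [show k + 1 + i = 2*(k+1) - j by omega] at this
    -- fib i ≡ ± fib k * fib j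
    have hC : (Nat.fib i : ℤ) ≡ (-1)^(j+1) * ((Nat.fib k : ℤ) * Nat.fib j) [ZMOD N] := by
      have hkey := fib_key i j
      rw [hij, show k + 1 + 1 = k + 2 from rfl] at hkey
      have h1 : (Nat.fib (k + 2) : ℤ) = Nat.fib k + Nat.fib (k+1) := by
        rw [Nat.fib_add_two]; push_cast; ring
      rw [hkey, h1]
      symm; rw [Int.modEq_iff_dvd]
      exact ⟨(-1)^j * (Nat.fib (j+1) : ℤ) - (-1)^j * Nat.fib j, by ring⟩
    have hC2 : ((Nat.fib i : ℤ))^2 ≡ (Nat.fib k : ℤ)^2 * (Nat.fib j : ℤ)^2 [ZMOD N] := by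
      have := hC.pow 2
      calc ((Nat.fib i : ℤ))^2 ≡ ((-1)^(j+1) * ((Nat.fib k : ℤ) * Nat.fib j))^2 [ZMOD N] := this
        _ = ((-1:ℤ)^(j+1))^2 * ((Nat.fib k : ℤ)^2 * (Nat.fib j : ℤ)^2) := by ring
        _ = (Nat.fib k : ℤ)^2 * (Nat.fib j : ℤ)^2 := by
            rw [← pow_mul]
            rw [(neg_one_pow_eq_one_iff_even (R := ℤ) (by norm_num)).mpr ⟨j+1, by ring⟩]
            ring
    calc (Nat.fib (2*(k+1) - j) : ℤ)^2
        ≡ ((Nat.fib k : ℤ) * Nat.fib i)^2 [ZMOD N] := hB.pow 2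
      _ = (Nat.fib k : ℤ)^2 * (Nat.fib i : ℤ)^2 := by ring
      _ ≡ (Nat.fib k : ℤ)^2 * ((Nat.fib k : ℤ)^2 * (Nat.fib j : ℤ)^2) [ZMOD N] := hC2.mul_left _
      _ = (Nat.fib k : ℤ)^4 * (Nat.fib j : ℤ)^2 := by ring
      _ ≡ 1 * (Nat.fib j : ℤ)^2 [ZMOD N] := h4.mul_right _
      _ = (Nat.fib j : ℤ)^2 := by ring
end

section
/- If κ is odd with κ ≥ 3 and 0 ≤ i ≤ κ, then F_{κ-i}^2 ≡ -F_i^2 (mod F_κ). -/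
/-- Cassini's identity over ℤ. -/
lemma cassini_int (n : ℕ) :
    (Nat.fib (n + 1) : ℤ) ^ 2 - (Nat.fib n : ℤ) * (Nat.fib (n + 2) : ℤ) = (-1) ^ n := by
  induction n with
  | zero => simp
  | succ k ih =>
    have h1 : (Nat.fib (k + 2) : ℤ) = Nat.fib k + Nat.fib (k + 1) := by
      rw [Nat.fib_add_two]; push_cast; ring
    have h2 : (Nat.fib (k + 3) : ℤ) = Nat.fib (k + 1) + Nat.fib (k + 2) := by
      rw [show k + 3 = (k + 1) + 2 from rfl, Nat.fib_add_two]; push_cast; ring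
    have : (Nat.fib (k + 2) : ℤ) ^ 2 - (Nat.fib (k + 1) : ℤ) * (Nat.fib (k + 3) : ℤ) =
        -((Nat.fib (k + 1) : ℤ) ^ 2 - (Nat.fib k : ℤ) * (Nat.fib (k + 2) : ℤ)) := by
      rw [h2, h1]; ring
    rw [this, ih]; ring

lemma fib_sub_cong (κ : ℕ) : ∀ i, i ≤ κ →
    (Nat.fib (κ - i) : ℤ) ≡ (-1) ^ (i + 1) * (Nat.fib i : ℤ) * (Nat.fib (κ - 1) : ℤ)
      [ZMOD (Nat.fib κ : ℤ)] := by
  intro i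
  induction i using Nat.strong_induction_on with
  | _ i ih =>
    match i with
    | 0 =>
      intro _
      simpa using (Int.modEq_zero_iff_dvd).mpr (dvd_refl (Nat.fib κ : ℤ))
    | 1 =>
      intro _
      simp
    | (j + 2) =>
      intro hle
      have h0 : j ≤ κ := by omega
      have h1 : j + 1 ≤ κ := by omega
      have e1 := ih j (by omega) h0
      have e2 := ih (j + 1) (by omega) h1
      have hfib : (Nat.fib (κ - (j + 2)) : ℤ) =
          (Nat.fib (κ - j) : ℤ) - (Nat.fib (κ - (j + 1)) : ℤ) := by
        have : κ - j = (κ - (j + 2)) + 2 := by omega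
        rw [this, Nat.fib_add_two]
        have : κ - (j + 1) = (κ - (j + 2)) + 1 := by omega
        rw [this]
        push_cast; ring
      have := e1.sub e2
      rw [← hfib] at this
      calc (Nat.fib (κ - (j + 2)) : ℤ)
          ≡ (-1) ^ (j + 1) * (Nat.fib j : ℤ) * (Nat.fib (κ - 1) : ℤ) -
            (-1) ^ (j + 2) * (Nat.fib (j + 1) : ℤ) * (Nat.fib (κ - 1) : ℤ)
            [ZMOD (Nat.fib κ : ℤ)] := this
        _ = (-1) ^ (j + 3) * (Nat.fib (j + 2) : ℤ) * (Nat.fib (κ - 1) : ℤ) := by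
            rw [Nat.fib_add_two]; push_cast; ring

theorem fib_sq_neg_mod (κ i : ℕ) (hκ : 3 ≤ κ) (hκo : Odd κ) (hi : i ≤ κ) :
    (Nat.fib (κ - i) : ℤ) ^ 2 ≡ -(Nat.fib i : ℤ) ^ 2 [ZMOD (Nat.fib κ : ℤ)] := by
  have key := fib_sub_cong κ i hi
  have hsq : (Nat.fib (κ - i) : ℤ) ^ 2 ≡
      (Nat.fib i : ℤ) ^ 2 * (Nat.fib (κ - 1) : ℤ) ^ 2 [ZMOD (Nat.fib κ : ℤ)] := by
    have := key.mul key
    calc (Nat.fib (κ - i) : ℤ) ^ 2 = (Nat.fib (κ - i) : ℤ) * (Nat.fib (κ - i) : ℤ) := by ring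
      _ ≡ ((-1) ^ (i + 1) * (Nat.fib i : ℤ) * (Nat.fib (κ - 1) : ℤ)) *
          ((-1) ^ (i + 1) * (Nat.fib i : ℤ) * (Nat.fib (κ - 1) : ℤ))
          [ZMOD (Nat.fib κ : ℤ)] := this
      _ = (Nat.fib i : ℤ) ^ 2 * (Nat.fib (κ - 1) : ℤ) ^ 2 := by
          have : ((-1 : ℤ) ^ (i + 1)) ^ 2 = 1 := by
            rw [← pow_mul, mul_comm, pow_mul]; norm_num
          nlinarith [this]
  -- fib(κ-1)^2 ≡ -1 mod fib κ
  have hcas := cassini_int (κ - 1)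
  have hk1 : κ - 1 + 1 = κ := by omega
  have hk2 : κ - 1 + 2 = κ + 1 := by omega
  rw [hk1, hk2] at hcas
  have hodd : ((-1 : ℤ)) ^ (κ - 1) = 1 := by
    have : Even (κ - 1) := by
      obtain ⟨m, hm⟩ := hκo; exact ⟨m, by omega⟩
    exact this.neg_one_pow
  rw [hodd] at hcas
  -- fib (κ+1) = fib (κ-1) + fib κ
  have hfib1 : (Nat.fib (κ + 1) : ℤ) = (Nat.fib (κ - 1) : ℤ) + (Nat.fib κ : ℤ) := by
    have : κ + 1 = (κ - 1) + 2 := by omega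
    rw [this, Nat.fib_add_two, hk1]
    push_cast; ring
  have hneg : (Nat.fib (κ - 1) : ℤ) ^ 2 ≡ -1 [ZMOD (Nat.fib κ : ℤ)] := by
    have hdvd : (Nat.fib κ : ℤ) ∣
        (Nat.fib (κ - 1) : ℤ) ^ 2 - (-1) := by
      rw [hfib1] at hcas
      have : (Nat.fib (κ - 1) : ℤ) ^ 2 - (-1) =
          (Nat.fib κ : ℤ) * ((Nat.fib κ : ℤ) - (Nat.fib (κ - 1) : ℤ)) := by
        linear_combination -hcas
      rw [this]; exact Dvd.intro _ rfl
    exact (Int.modEq_iff_dvd.mpr hdvd).symm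
  calc (Nat.fib (κ - i) : ℤ) ^ 2
      ≡ (Nat.fib i : ℤ) ^ 2 * (Nat.fib (κ - 1) : ℤ) ^ 2 [ZMOD (Nat.fib κ : ℤ)] := hsq
    _ ≡ (Nat.fib i : ℤ) ^ 2 * (-1) [ZMOD (Nat.fib κ : ℤ)] := (Int.ModEq.refl _).mul hneg
    _ = -(Nat.fib i : ℤ) ^ 2 := by ring
end
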